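/- arXiv:2110.03576 — 3 statements merged into one kernel-verified Lean document; each statement's English description precedes it below -/
import Mathlib

section
/- Stability of a single graph filter to graph perturbations: let S, Ŝ ∈ ℝ^{N×N} with ‖Ŝ − S‖ ≤ ε in operator norm, and suppose ‖S‖ ≤ ρ and ‖Ŝ‖ ≤ ρ. Then for any filter coefficients h = (h_0,…,h_{K-1}) and any x with ‖x‖ ≤ 1, ‖h ∗_S x − h ∗_{Ŝ} x‖ ≤ ε · ∑_{k=1}^{K-1} |h_k| k ρ^{k−1}. -/
open Finset

/-- Graph convolutional filter as an operator: `h ∗_S = ∑_{k=0}^{K-1} h_k S^k`. -/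
noncomputable def graphFilter {N : ℕ} (K : ℕ) (h : ℕ → ℝ)
    (S : EuclideanSpace ℝ (Fin N) →L[ℝ] EuclideanSpace ℝ (Fin N)) :
    EuclideanSpace ℝ (Fin N) →L[ℝ] EuclideanSpace ℝ (Fin N) :=
  ∑ k ∈ range K, h k • S ^ k

lemma pow_diff_bound {N : ℕ} (ρ ε : ℝ)
    (S T : EuclideanSpace ℝ (Fin N) →L[ℝ] EuclideanSpace ℝ (Fin N))
    (hS : ‖S‖ ≤ ρ) (hT : ‖T‖ ≤ ρ) (hpert : ‖T - S‖ ≤ ε) :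
    ∀ k : ℕ, ‖S ^ k - T ^ k‖ ≤ (k : ℝ) * ρ ^ (k - 1) * ε := by
  have hρ : 0 ≤ ρ := le_trans (norm_nonneg S) hS
  have hST : ‖S - T‖ ≤ ε := by rwa [norm_sub_rev]
  intro k
  induction k with
  | zero => simp only [pow_zero, sub_self, norm_zero, Nat.cast_zero, zero_mul]; exact le_refl 0
  | succ k ih =>
    have hid : S ^ (k + 1) - T ^ (k + 1) = S * (S ^ k - T ^ k) + (S - T) * T ^ k := by
      rw [mul_sub, sub_mul, sub_add_sub_cancel, ← pow_succ', ← pow_succ']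
    have h1 : ‖S * (S ^ k - T ^ k)‖ ≤ ρ * ((k : ℝ) * ρ ^ (k - 1) * ε) := by
      calc ‖S * (S ^ k - T ^ k)‖ ≤ ‖S‖ * ‖S ^ k - T ^ k‖ := norm_mul_le _ _
        _ ≤ ρ * ((k : ℝ) * ρ ^ (k - 1) * ε) := by
            apply mul_le_mul hS ih (norm_nonneg _) hρ
    have hTk : ∀ m : ℕ, ‖T ^ m‖ ≤ ρ ^ m := by
      intro m
      induction m with
      | zero =>
        rw [pow_zero, pow_zero, ContinuousLinearMap.one_def]
        exact ContinuousLinearMap.norm_id_le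
      | succ m ihm =>
        rw [pow_succ, pow_succ]
        exact le_trans (norm_mul_le _ _)
          (mul_le_mul ihm hT (norm_nonneg _) (pow_nonneg hρ m))
    have h2 : ‖(S - T) * T ^ k‖ ≤ ε * ρ ^ k := by
      calc ‖(S - T) * T ^ k‖ ≤ ‖S - T‖ * ‖T ^ k‖ := norm_mul_le _ _
        _ ≤ ε * ρ ^ k := mul_le_mul hST (hTk k) (norm_nonneg _)
            (le_trans (norm_nonneg _) hST)
    have h3 : ρ * ((k : ℝ) * ρ ^ (k - 1) * ε) ≤ (k : ℝ) * ρ ^ k * ε := by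
      cases k with
      | zero => simp
      | succ m =>
        apply le_of_eq
        simp only [Nat.add_sub_cancel, pow_succ]
        ring
    calc ‖S ^ (k + 1) - T ^ (k + 1)‖ = ‖S * (S ^ k - T ^ k) + (S - T) * T ^ k‖ := by rw [hid]
      _ ≤ ‖S * (S ^ k - T ^ k)‖ + ‖(S - T) * T ^ k‖ := norm_add_le _ _
      _ ≤ ρ * ((k : ℝ) * ρ ^ (k - 1) * ε) + ε * ρ ^ k := add_le_add h1 h2
      _ ≤ (k : ℝ) * ρ ^ k * ε + ε * ρ ^ k := by linarith
      _ = ((k + 1 : ℕ) : ℝ) * ρ ^ (k + 1 - 1) * ε := by push_cast; ring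

/-- Stability of a single graph filter to graph perturbations: if `‖T − S‖ ≤ ε`,
`‖S‖ ≤ ρ`, `‖T‖ ≤ ρ`, then for any unit-norm input `x`,
`‖h ∗_S x − h ∗_T x‖ ≤ ε ∑_{k=1}^{K-1} |h_k| k ρ^(k−1)`. -/
theorem graphFilter_stability {N : ℕ} (K : ℕ) (h : ℕ → ℝ) (ρ ε : ℝ)
    (S T : EuclideanSpace ℝ (Fin N) →L[ℝ] EuclideanSpace ℝ (Fin N))
    (hS : ‖S‖ ≤ ρ) (hT : ‖T‖ ≤ ρ) (hpert : ‖T - S‖ ≤ ε)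
    (x : EuclideanSpace ℝ (Fin N)) (hx : ‖x‖ ≤ 1) :
    ‖graphFilter K h S x - graphFilter K h T x‖ ≤
      ε * ∑ k ∈ Icc 1 (K - 1), |h k| * (k : ℝ) * ρ ^ (k - 1) := by
  have key := pow_diff_bound ρ ε S T hS hT hpert
  have hεnn : 0 ≤ ε := le_trans (norm_nonneg _) hpert
  have hρ : 0 ≤ ρ := le_trans (norm_nonneg S) hS
  have hxnn : 0 ≤ ‖x‖ := norm_nonneg x
  have step1 : graphFilter K h S x - graphFilter K h T x
      = ∑ k ∈ range K, h k • ((S ^ k - T ^ k) x) := by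
    simp [graphFilter, ContinuousLinearMap.sum_apply, ← Finset.sum_sub_distrib,
      ContinuousLinearMap.sub_apply, smul_sub]
  have step2 : ∀ k ∈ range K, ‖h k • ((S ^ k - T ^ k) x)‖ ≤ |h k| * ((k : ℝ) * ρ ^ (k - 1) * ε) := by
    intro k _
    rw [norm_smul, Real.norm_eq_abs]
    apply mul_le_mul_of_nonneg_left _ (abs_nonneg _)
    calc ‖(S ^ k - T ^ k) x‖ ≤ ‖S ^ k - T ^ k‖ * ‖x‖ := (S ^ k - T ^ k).le_opNorm x
      _ ≤ ((k : ℝ) * ρ ^ (k - 1) * ε) * 1 := by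
          apply mul_le_mul (key k) hx hxnn
          positivity
      _ = (k : ℝ) * ρ ^ (k - 1) * ε := mul_one _
  have step3 : ∑ k ∈ range K, |h k| * ((k : ℝ) * ρ ^ (k - 1) * ε)
      = ε * ∑ k ∈ Icc 1 (K - 1), |h k| * (k : ℝ) * ρ ^ (k - 1) := by
    cases K with
    | zero => simp
    | succ n =>
      have hIcc : Icc 1 n = Ico 1 (n + 1) := by rw [Finset.Ico_add_one_right_eq_Icc]
      rw [Nat.succ_sub_one, hIcc, Finset.range_eq_Ico,
        Finset.sum_eq_sum_Ico_succ_bot (Nat.zero_lt_succ n)]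
      rw [Finset.mul_sum]
      simp only [Nat.cast_zero, zero_mul, mul_zero, zero_add]
      exact Finset.sum_congr rfl fun k _ => by ring
  calc ‖graphFilter K h S x - graphFilter K h T x‖
      = ‖∑ k ∈ range K, h k • ((S ^ k - T ^ k) x)‖ := by rw [step1]
    _ ≤ ∑ k ∈ range K, ‖h k • ((S ^ k - T ^ k) x)‖ := norm_sum_le _ _
    _ ≤ ∑ k ∈ range K, |h k| * ((k : ℝ) * ρ ^ (k - 1) * ε) := Finset.sum_le_sum step2
    _ = ε * ∑ k ∈ Icc 1 (K - 1), |h k| * (k : ℝ) * ρ ^ (k - 1) := step3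
end

section
/- Stability of a multi-layer GNN: let φ be an L-layer GNN where each layer l applies x ↦ σ(h^{(l)} ∗_S x) with σ 1-Lipschitz, σ(0)=0, and each filter satisfying ‖∑_k h_k^{(l)} S^k‖ ≤ 1 and ‖∑_k h_k^{(l)}(S^k − Ŝ^k)‖ ≤ Cε for ‖Ŝ − S‖ ≤ ε. Then for any x with ‖x‖ ≤ 1, ‖φ(x, S) − φ(x, Ŝ)‖ ≤ L C ε. -/
/-! A layer with filter norm at most 1 and a 1-Lipschitz nonlinearity fixing 0 does not increase
norms, so every hidden state of either network stays in the ball of radius `‖x‖`. Writing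
`A u - B v = A (u - v) + (A - B) v`, the discrepancy between the two networks therefore grows by at
most `‖A - B‖ ‖x‖ ≤ C ε ‖x‖` per layer. -/

open Finset

/-- Pointwise (componentwise) application of a scalar function to a Euclidean vector. -/
noncomputable def pointwiseApply {N : ℕ} (σ : ℝ → ℝ) (y : EuclideanSpace ℝ (Fin N)) :
    EuclideanSpace ℝ (Fin N) :=
  (WithLp.equiv 2 (Fin N → ℝ)).symm fun i => σ ((WithLp.equiv 2 (Fin N → ℝ)) y i)

/-- The `L`-layer GNN: `x_0 = x`, `x_l = σ(h^{(l)} ∗_S x_{l-1})`. -/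
noncomputable def gnn {N : ℕ} (σ : ℝ → ℝ) (K : ℕ) (h : ℕ → ℕ → ℝ)
    (S : EuclideanSpace ℝ (Fin N) →L[ℝ] EuclideanSpace ℝ (Fin N)) :
    ℕ → EuclideanSpace ℝ (Fin N) → EuclideanSpace ℝ (Fin N)
  | 0, x => x
  | l + 1, x => pointwiseApply σ (graphFilter K (h l) S (gnn σ K h S l x))

section Pointwise

variable {N : ℕ} {σ : ℝ → ℝ}

theorem pointwiseApply_apply (y : EuclideanSpace ℝ (Fin N)) (i : Fin N) :
    pointwiseApply σ y i = σ (y i) :=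
  rfl

theorem pointwiseApply_zero (hσ0 : σ 0 = 0) :
    pointwiseApply σ (0 : EuclideanSpace ℝ (Fin N)) = 0 := by
  ext i
  simp [pointwiseApply_apply, hσ0]

theorem lipschitzWith_pointwiseApply {K : NNReal} (hσ : LipschitzWith K σ) :
    LipschitzWith K (pointwiseApply (N := N) σ) := by
  refine LipschitzWith.of_dist_le_mul fun y z => ?_
  have hcoord : ∀ i, dist (σ (y i)) (σ (z i)) ^ 2 ≤ ((K : ℝ) * dist (y i) (z i)) ^ 2 :=
    fun i => pow_le_pow_left₀ dist_nonneg (hσ.dist_le_mul _ _) 2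
  calc dist (pointwiseApply σ y) (pointwiseApply σ z)
      = √(∑ i, dist (σ (y i)) (σ (z i)) ^ 2) := EuclideanSpace.dist_eq _ _
    _ ≤ √(∑ i, ((K : ℝ) * dist (y i) (z i)) ^ 2) :=
        Real.sqrt_le_sqrt (Finset.sum_le_sum fun i _ => hcoord i)
    _ = K * dist y z := by
        simp_rw [mul_pow, ← Finset.mul_sum, EuclideanSpace.dist_eq y z]
        rw [Real.sqrt_mul (by positivity), Real.sqrt_sq K.coe_nonneg]

end Pointwise

theorem ContinuousLinearMap.norm_apply_sub_apply_le {𝕜 E F : Type*} [NontriviallyNormedField 𝕜]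
    [SeminormedAddCommGroup E] [SeminormedAddCommGroup F] [NormedSpace 𝕜 E] [NormedSpace 𝕜 F]
    (A B : E →L[𝕜] F) (u v : E) :
    ‖A u - B v‖ ≤ ‖A‖ * ‖u - v‖ + ‖A - B‖ * ‖v‖ :=
  calc ‖A u - B v‖ = ‖A (u - v) + (A - B) v‖ := by simp
    _ ≤ ‖A (u - v)‖ + ‖(A - B) v‖ := norm_add_le _ _
    _ ≤ ‖A‖ * ‖u - v‖ + ‖A - B‖ * ‖v‖ := add_le_add (A.le_opNorm _) ((A - B).le_opNorm _)

section GNN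

variable {N K L : ℕ} {h : ℕ → ℕ → ℝ} {σ : ℝ → ℝ}
  {S T : EuclideanSpace ℝ (Fin N) →L[ℝ] EuclideanSpace ℝ (Fin N)}

theorem gnn_succ (l : ℕ) (x : EuclideanSpace ℝ (Fin N)) :
    gnn σ K h S (l + 1) x = pointwiseApply σ (graphFilter K (h l) S (gnn σ K h S l x)) :=
  rfl

theorem norm_gnn_le (hσ : LipschitzWith 1 σ) (hσ0 : σ 0 = 0)
    (hnorm : ∀ l < L, ‖graphFilter K (h l) S‖ ≤ 1) (x : EuclideanSpace ℝ (Fin N)) :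
    ∀ l ≤ L, ‖gnn σ K h S l x‖ ≤ ‖x‖
  | 0, _ => le_rfl
  | l + 1, hl => by
    have hσ' := lipschitzWith_pointwiseApply (N := N) hσ
    calc ‖gnn σ K h S (l + 1) x‖ ≤ ‖graphFilter K (h l) S (gnn σ K h S l x)‖ := by
          simpa [gnn_succ] using hσ'.norm_le_mul (pointwiseApply_zero hσ0) _
      _ ≤ 1 * ‖gnn σ K h S l x‖ := (ContinuousLinearMap.le_opNorm _ _).trans
          (mul_le_mul_of_nonneg_right (hnorm l hl) (norm_nonneg _))
      _ ≤ ‖x‖ := by simpa using norm_gnn_le hσ hσ0 hnorm x l (by omega)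

theorem norm_gnn_sub_gnn_le (hσ : LipschitzWith 1 σ) (hσ0 : σ 0 = 0) {δ : ℝ}
    (hnormS : ∀ l < L, ‖graphFilter K (h l) S‖ ≤ 1)
    (hnormT : ∀ l < L, ‖graphFilter K (h l) T‖ ≤ 1)
    (hfilt : ∀ l < L, ‖graphFilter K (h l) S - graphFilter K (h l) T‖ ≤ δ)
    (x : EuclideanSpace ℝ (Fin N)) :
    ∀ l ≤ L, ‖gnn σ K h S l x - gnn σ K h T l x‖ ≤ l * δ * ‖x‖
  | 0, _ => by simp [gnn]
  | l + 1, hl => by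
    have hσ' := lipschitzWith_pointwiseApply (N := N) hσ
    set A := graphFilter K (h l) S
    set B := graphFilter K (h l) T
    set u := gnn σ K h S l x
    set v := gnn σ K h T l x
    have hu_sub_v : ‖u - v‖ ≤ l * δ * ‖x‖ :=
      norm_gnn_sub_gnn_le hσ hσ0 hnormS hnormT hfilt x l (by omega)
    have hv : ‖v‖ ≤ ‖x‖ := norm_gnn_le hσ hσ0 hnormT x l (by omega)
    have hδ : 0 ≤ δ := (norm_nonneg _).trans (hfilt l hl)
    calc ‖gnn σ K h S (l + 1) x - gnn σ K h T (l + 1) x‖ ≤ ‖A u - B v‖ := by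
          simpa [gnn_succ, ← dist_eq_norm] using hσ'.dist_le_mul (A u) (B v)
      _ ≤ ‖A‖ * ‖u - v‖ + ‖A - B‖ * ‖v‖ := A.norm_apply_sub_apply_le B u v
      _ ≤ 1 * (l * δ * ‖x‖) + δ * ‖x‖ := by
          gcongr
          · exact hnormS l hl
          · exact hfilt l hl
      _ = (l + 1 : ℕ) * δ * ‖x‖ := by push_cast; ring

end GNN

theorem multi_layer_gnn_stability_general {N : ℕ} (K L : ℕ) (h : ℕ → ℕ → ℝ) (σ : ℝ → ℝ)
    (hσ : ∀ a b : ℝ, |σ a - σ b| ≤ |a - b|) (hσ0 : σ 0 = 0) (C ε : ℝ)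
    (S T : EuclideanSpace ℝ (Fin N) →L[ℝ] EuclideanSpace ℝ (Fin N))
    (hnormS : ∀ l < L, ‖graphFilter K (h l) S‖ ≤ 1)
    (hnormT : ∀ l < L, ‖graphFilter K (h l) T‖ ≤ 1)
    (hfiltpert : ∀ l < L, ‖graphFilter K (h l) S - graphFilter K (h l) T‖ ≤ C * ε)
    (x : EuclideanSpace ℝ (Fin N)) (hx : ‖x‖ ≤ 1) :
    ‖gnn σ K h S L x - gnn σ K h T L x‖ ≤ (L : ℝ) * C * ε := by
  have hσ' : LipschitzWith 1 σ :=
    LipschitzWith.of_dist_le_mul fun a b => by simpa [Real.dist_eq] using hσ a b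
  have hstab := norm_gnn_sub_gnn_le hσ' hσ0 hnormS hnormT hfiltpert x L le_rfl
  rcases Nat.eq_zero_or_pos L with rfl | hL
  · simpa using hstab
  have hCε : 0 ≤ C * ε := (norm_nonneg _).trans (hfiltpert 0 hL)
  calc _ ≤ L * (C * ε) * ‖x‖ := hstab
    _ ≤ L * (C * ε) := mul_le_of_le_one_right (by positivity) hx
    _ = L * C * ε := by ring

/-- Stability of a multi-layer GNN: with a 1-Lipschitz nonlinearity fixing `0`, filters of
operator norm at most `1`, and per-layer filter perturbations bounded by `C ε`, the `L`-layer
GNN satisfies `‖φ(x,S) − φ(x,T)‖ ≤ L C ε` for unit-norm inputs. -/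
theorem multi_layer_gnn_stability {N : ℕ} (K L : ℕ) (h : ℕ → ℕ → ℝ) (σ : ℝ → ℝ)
    (hσ : ∀ a b : ℝ, |σ a - σ b| ≤ |a - b|) (hσ0 : σ 0 = 0) (C ε : ℝ)
    (S T : EuclideanSpace ℝ (Fin N) →L[ℝ] EuclideanSpace ℝ (Fin N))
    (hpert : ‖T - S‖ ≤ ε)
    (hnormS : ∀ l < L, ‖graphFilter K (h l) S‖ ≤ 1)
    (hnormT : ∀ l < L, ‖graphFilter K (h l) T‖ ≤ 1)
    (hfiltpert : ∀ l < L, ‖graphFilter K (h l) S - graphFilter K (h l) T‖ ≤ C * ε)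
    (x : EuclideanSpace ℝ (Fin N)) (hx : ‖x‖ ≤ 1) :
    ‖gnn σ K h S L x - gnn σ K h T L x‖ ≤ (L : ℝ) * C * ε :=
  multi_layer_gnn_stability_general K L h σ hσ hσ0 C ε S T hnormS hnormT hfiltpert x hx
end

section
/- If φ(x, S) = h ∗_S x is a single linear filter with ∑_{k=1}^{K-1} |h_k| k ρ^{k−1} ≤ C, and ‖S‖, ‖Ŝ‖ ≤ ρ, then φ is C-stable: sup_{‖x‖≤1} ‖φ(x,S) − φ(x,Ŝ)‖ ≤ C‖Ŝ − S‖. -/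
open Finset

set_option maxHeartbeats 1000000 in
set_option synthInstance.maxHeartbeats 200000 in
lemma norm_pow_le_rho {N : ℕ} (ρ : ℝ)
    (S : EuclideanSpace ℝ (Fin N) →L[ℝ] EuclideanSpace ℝ (Fin N))
    (hS : ‖S‖ ≤ ρ) : ∀ k : ℕ, ‖S ^ k‖ ≤ ρ ^ k := by
  have hρ : (0:ℝ) ≤ ρ := le_trans (norm_nonneg S) hS
  intro k
  induction k with
  | zero =>
      rw [pow_zero, pow_zero]
      exact ContinuousLinearMap.norm_id_le
  | succ k ih =>
      rw [pow_succ, pow_succ]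
      calc ‖S ^ k * S‖ ≤ ‖S ^ k‖ * ‖S‖ := norm_mul_le _ _
        _ ≤ ρ ^ k * ρ := by gcongr

set_option maxHeartbeats 1000000 in
set_option synthInstance.maxHeartbeats 200000 in
lemma pow_sub_pow_norm_le {N : ℕ} (ρ : ℝ)
    (S T : EuclideanSpace ℝ (Fin N) →L[ℝ] EuclideanSpace ℝ (Fin N))
    (hS : ‖S‖ ≤ ρ) (hT : ‖T‖ ≤ ρ) :
    ∀ k : ℕ, ‖S ^ k - T ^ k‖ ≤ (k : ℝ) * ρ ^ (k - 1) * ‖S - T‖ := by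
  have hρ : (0:ℝ) ≤ ρ := le_trans (norm_nonneg S) hS
  intro k
  induction k with
  | zero =>
      simp only [pow_zero, sub_self, norm_zero, Nat.cast_zero, zero_mul]
      exact le_refl 0
  | succ k ih =>
      have key : S ^ (k+1) - T ^ (k+1) = S ^ k * (S - T) + (S ^ k - T ^ k) * T := by
        rw [pow_succ, pow_succ, mul_sub, sub_mul]
        abel
      rw [key]
      have h1 : ‖S ^ k * (S - T) + (S ^ k - T ^ k) * T‖
          ≤ ρ ^ k * ‖S - T‖ + ((k : ℝ) * ρ ^ (k - 1) * ‖S - T‖) * ρ := by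
        calc ‖S ^ k * (S - T) + (S ^ k - T ^ k) * T‖
            ≤ ‖S ^ k * (S - T)‖ + ‖(S ^ k - T ^ k) * T‖ := norm_add_le _ _
          _ ≤ ‖S ^ k‖ * ‖S - T‖ + ‖S ^ k - T ^ k‖ * ‖T‖ :=
              add_le_add (norm_mul_le _ _) (norm_mul_le _ _)
          _ ≤ ρ ^ k * ‖S - T‖ + ((k : ℝ) * ρ ^ (k - 1) * ‖S - T‖) * ρ := by
              gcongr <;> first
                | exact norm_pow_le_rho ρ S hS k
                | exact ih
                | exact hT
                | positivity
      refine le_trans h1 ?_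
      rcases Nat.eq_zero_or_pos k with hk | hk
      · subst hk; norm_num
      · have h2 : ρ ^ (k - 1) * ρ = ρ ^ k := by
          rw [← pow_succ, Nat.sub_add_cancel hk]
        have h3 : ((k : ℝ) * ρ ^ (k - 1) * ‖S - T‖) * ρ = (k : ℝ) * ρ ^ k * ‖S - T‖ := by
          rw [← h2]; ring
        rw [h3, Nat.add_sub_cancel]
        push_cast
        exact le_of_eq (by ring)

set_option maxHeartbeats 1000000 in
set_option synthInstance.maxHeartbeats 200000 in
/-- A single linear graph filter with `∑_{k=1}^{K-1} |h_k| k ρ^(k−1) ≤ C` is `C`-stable: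
for `‖S‖, ‖T‖ ≤ ρ`, `sup_{‖x‖≤1} ‖h ∗_S x − h ∗_T x‖ ≤ C ‖T − S‖`. -/
theorem graphFilter_C_stable {N : ℕ} (K : ℕ) (h : ℕ → ℝ) (ρ C : ℝ)
    (hC : ∑ k ∈ Icc 1 (K - 1), |h k| * (k : ℝ) * ρ ^ (k - 1) ≤ C)
    (S T : EuclideanSpace ℝ (Fin N) →L[ℝ] EuclideanSpace ℝ (Fin N))
    (hS : ‖S‖ ≤ ρ) (hT : ‖T‖ ≤ ρ) :
    ∀ x : EuclideanSpace ℝ (Fin N), ‖x‖ ≤ 1 →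
      ‖graphFilter K h S x - graphFilter K h T x‖ ≤ C * ‖T - S‖ := by
  intro x hx
  have hρ : (0:ℝ) ≤ ρ := le_trans (norm_nonneg S) hS
  have hST : ‖T - S‖ = ‖S - T‖ := norm_sub_rev _ _
  have hdiff : graphFilter K h S x - graphFilter K h T x
      = ∑ k ∈ range K, h k • ((S ^ k - T ^ k) x) := by
    simp only [graphFilter, ContinuousLinearMap.sum_apply, ContinuousLinearMap.smul_apply,
      ContinuousLinearMap.sub_apply, smul_sub, Finset.sum_sub_distrib]
  rw [hdiff, hST]
  have step1 : ‖∑ k ∈ range K, h k • ((S ^ k - T ^ k) x)‖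
      ≤ ∑ k ∈ range K, |h k| * ((k : ℝ) * ρ ^ (k - 1) * ‖S - T‖) := by
    refine le_trans (norm_sum_le _ _) (Finset.sum_le_sum ?_)
    intro k _
    rw [norm_smul, Real.norm_eq_abs]
    refine mul_le_mul_of_nonneg_left ?_ (abs_nonneg _)
    calc ‖(S ^ k - T ^ k) x‖ ≤ ‖S ^ k - T ^ k‖ * ‖x‖ := (S ^ k - T ^ k).le_opNorm x
      _ ≤ ((k : ℝ) * ρ ^ (k - 1) * ‖S - T‖) * 1 :=
          mul_le_mul (pow_sub_pow_norm_le ρ S T hS hT k) hx (norm_nonneg x)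
            (by positivity)
      _ = (k : ℝ) * ρ ^ (k - 1) * ‖S - T‖ := mul_one _
  refine le_trans step1 ?_
  have step2 : ∑ k ∈ range K, |h k| * ((k : ℝ) * ρ ^ (k - 1) * ‖S - T‖)
      = (∑ k ∈ Icc 1 (K - 1), |h k| * (k : ℝ) * ρ ^ (k - 1)) * ‖S - T‖ := by
    rw [Finset.sum_mul]
    rcases Nat.eq_zero_or_pos K with hK | hK
    · subst hK; simp
    · rw [show Icc 1 (K - 1) = Ico 1 K by
        rw [← Finset.Ico_add_one_right_eq_Icc]; congr 1; omega]
      rw [Finset.range_eq_Ico, ← Finset.sum_Ico_consecutive _ (Nat.zero_le 1) hK]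
      simp [mul_assoc]
  rw [step2]
  exact mul_le_mul_of_nonneg_right hC (norm_nonneg _)
end
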